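/- arXiv:1504.05834 — 3 statements merged into one kernel-verified Lean document; each statement's English description precedes it below -/
import Mathlib

section
/- Let σ_0, σ_1, κ_0, κ_1 be positive reals, set σ = σ_0 + σ_1 and κ = κ_0 + κ_1, and for i ∈ {0,1} define γ_i(s) = (σ_i s)²/(1 − κ_i s) for s ∈ [0, 1/κ_i). For t ∈ [0, 1/κ), let u = (σ_0/σ)(1 − κt) + κ_0 t. Then u ∈ (0,1), 1 − u = (σ_1/σ)(1 − κt) + κ_1 t, t/u < 1/κ_0, t/(1−u) < 1/κ_1, and u·γ_0(t/u) + (1−u)·γ_1(t/(1−u)) = (σ t)² / (1 − κ t). -/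
open MeasureTheory ProbabilityTheory Matrix Set Real

noncomputable section

instance matMS {d : ℕ} : MeasurableSpace (Matrix (Fin d) (Fin d) ℝ) :=
  show MeasurableSpace (Fin d → Fin d → ℝ) from inferInstance

/-- The β-dependence (absolute regularity) coefficient between two sub-σ-algebras:
`β(𝒜,ℬ) = (1/2) sup Σᵢ Σⱼ |P(Aᵢ ∩ Bⱼ) − P(Aᵢ)P(Bⱼ)|`, the supremum running over all
finite partitions `(Aᵢ)` of `Ω` with elements in `𝒜` and `(Bⱼ)` with elements in `ℬ`. -/
def betaMix {Ω : Type*} [MeasurableSpace Ω] (μ : Measure Ω)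
    (m₁ m₂ : MeasurableSpace Ω) : ℝ :=
  (1 / 2) * sSup { r : ℝ |
    ∃ (n m : ℕ) (A : Fin n → Set Ω) (B : Fin m → Set Ω),
      (∀ i, MeasurableSet[m₁] (A i)) ∧ (∀ j, MeasurableSet[m₂] (B j)) ∧
      Pairwise (Function.onFun Disjoint A) ∧ Pairwise (Function.onFun Disjoint B) ∧
      (⋃ i, A i) = Set.univ ∧ (⋃ j, B j) = Set.univ ∧
      r = ∑ i : Fin n, ∑ j : Fin m,
        |(μ (A i ∩ B j)).toReal - (μ (A i)).toReal * (μ (B j)).toReal| }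

/-- Largest eigenvalue of a (self-adjoint) matrix: the supremum of its real spectrum. -/
def lambdaMax {d : ℕ} (A : Matrix (Fin d) (Fin d) ℝ) : ℝ := sSup (spectrum ℝ A)

/-- Smallest eigenvalue of a (self-adjoint) matrix: the infimum of its real spectrum. -/
def lambdaMin {d : ℕ} (A : Matrix (Fin d) (Fin d) ℝ) : ℝ := sInf (spectrum ℝ A)

/-- Entrywise expectation of a random matrix. -/
def matMean {Ω : Type*} [MeasurableSpace Ω] (μ : Measure Ω) {d : ℕ}
    (X : Ω → Matrix (Fin d) (Fin d) ℝ) : Matrix (Fin d) (Fin d) ℝ :=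
  Matrix.of fun i j => ∫ ω, X ω i j ∂μ

/-- Matrix exponential. -/
def mexp {d : ℕ} (A : Matrix (Fin d) (Fin d) ℝ) : Matrix (Fin d) (Fin d) ℝ :=
  NormedSpace.exp A

/-- σ-algebra generated by a family of random variables indexed by a set. -/
def sigmaOf {Ω ι E : Type*} [MeasurableSpace Ω] [MeasurableSpace E]
    (X : ι → Ω → E) (S : Set ι) : MeasurableSpace Ω :=
  ⨆ i ∈ S, MeasurableSpace.comap (X i) inferInstance

/-- The factor `γ(c,n) = (log n / log 2) · max(2, 32 log n / (c log 2))`. -/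
def gammaCN (c : ℝ) (n : ℕ) : ℝ :=
  (Real.log n / Real.log 2) * max 2 (32 * Real.log n / (c * Real.log 2))

/-- `v² = sup_{∅ ≠ K ⊆ {1,…,n}} (1/Card K) λ_max( E (Σ_{i∈K} X_i)² )`. -/
def vSq {Ω : Type*} [MeasurableSpace Ω] (μ : Measure Ω) {d : ℕ}
    (X : ℕ → Ω → Matrix (Fin d) (Fin d) ℝ) (n : ℕ) : ℝ :=
  sSup { r : ℝ | ∃ K : Finset ℕ, K.Nonempty ∧ K ⊆ Finset.Icc 1 n ∧
    r = (K.card : ℝ)⁻¹ * lambdaMax (matMean μ fun ω => (∑ i ∈ K, X i ω) ^ 2) }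

/-- The underlying probability space is rich enough to contain a sequence `(ε_i)_{i∈ℤ}` of
iid random variables with uniform distribution over `[0,1]²`, independent of the family
`(X_i)_{i∈ι}`. -/
def RichEnough {Ω ι E : Type*} [MeasurableSpace Ω] [MeasurableSpace E]
    (μ : Measure Ω) (X : ι → Ω → E) : Prop :=
  ∃ ε : ℤ → Ω → ℝ × ℝ,
    (∀ i, Measurable (ε i)) ∧
    iIndepFun ε μ ∧
    (∀ i, Measure.map (ε i) μ =
      (volume.restrict (Set.Icc (0:ℝ) 1)).prod (volume.restrict (Set.Icc (0:ℝ) 1))) ∧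
    Indep (⨆ i, MeasurableSpace.comap (ε i) inferInstance)
      (⨆ i, MeasurableSpace.comap (X i) inferInstance) μ

/-- Geometric decay of the β-mixing coefficients of a sequence `(X_i)_{i≥1}` of random
matrices: `β_k = sup_{j≥1} β(σ(X_i : i ≤ j), σ(X_i : i ≥ j+k)) ≤ e^{−c(k−1)}` for `k ≥ 1`. -/
def BetaGeomDecay {Ω : Type*} [MeasurableSpace Ω] (μ : Measure Ω) {d : ℕ}
    (X : ℕ → Ω → Matrix (Fin d) (Fin d) ℝ) (c : ℝ) : Prop :=
  ∀ k : ℕ, 1 ≤ k → ∀ j : ℕ, 1 ≤ j →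
    betaMix μ (sigmaOf X {i | 1 ≤ i ∧ i ≤ j}) (sigmaOf X {i | j + k ≤ i}) ≤
      Real.exp (-c * ((k : ℝ) - 1))

/-
Write `D = 1 - κ t` with `κ = κ₀ + κ₁`, `σ = σ₀ + σ₁`. The split is chosen so that
`u - κ₀ t = (σ₀ / σ) D` and `(1 - u) - κ₁ t = (σ₁ / σ) D`: each branch receives a share of the
slack `D` proportional to its `σᵢ`, the equality case of Cauchy–Schwarz.
Since `u γ₀(t / u) = (σ₀ t)² / (u - κ₀ t)`, the left-hand side becomes
`(σ₀ t)² / ((σ₀ / σ) D) + (σ₁ t)² / ((σ₁ / σ) D) = σ₀ σ t² / D + σ₁ σ t² / D = (σ t)² / D`.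
-/

theorem mul_sq_div_one_sub_mul_div (σ κ t : ℝ) {u : ℝ} (hu : u ≠ 0) :
    u * ((σ * (t / u)) ^ 2 / (1 - κ * (t / u))) = (σ * t) ^ 2 / (u - κ * t) := by
  rw [show 1 - κ * (t / u) = (u - κ * t) / u by field_simp]
  field_simp

theorem sq_div_add_sq_div_of_proportional {a b : ℝ} (hab : a + b ≠ 0) (t D : ℝ) :
    (a * t) ^ 2 / (a / (a + b) * D) + (b * t) ^ 2 / (b / (a + b) * D) = ((a + b) * t) ^ 2 / D := by
  rcases eq_or_ne D 0 with rfl | hD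
  · simp
  field_simp

theorem div_lt_one_div_of_mul_lt {κ t u : ℝ} (hu : 0 < u) (hκ : 0 < κ) (h : κ * t < u) :
    t / u < 1 / κ := by
  rw [div_lt_div_iff₀ hu hκ]
  linarith

/-- The algebraic interpolation identity behind the log-Laplace summation lemma:
the optimal split `u` of the time parameter `t` between two branches with parameters
`(σ₀, κ₀)` and `(σ₁, κ₁)`. -/
theorem interpolation_split_identity
    (σ₀ σ₁ κ₀ κ₁ t : ℝ)
    (hσ₀ : 0 < σ₀) (hσ₁ : 0 < σ₁) (hκ₀ : 0 < κ₀) (hκ₁ : 0 < κ₁)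
    (ht0 : 0 ≤ t) (ht : t < 1 / (κ₀ + κ₁)) :
    ∀ u : ℝ, u = σ₀ / (σ₀ + σ₁) * (1 - (κ₀ + κ₁) * t) + κ₀ * t →
      0 < u ∧ u < 1 ∧
      1 - u = σ₁ / (σ₀ + σ₁) * (1 - (κ₀ + κ₁) * t) + κ₁ * t ∧
      t / u < 1 / κ₀ ∧
      t / (1 - u) < 1 / κ₁ ∧
      u * ((σ₀ * (t / u)) ^ 2 / (1 - κ₀ * (t / u))) +
        (1 - u) * ((σ₁ * (t / (1 - u))) ^ 2 / (1 - κ₁ * (t / (1 - u)))) =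
        ((σ₀ + σ₁) * t) ^ 2 / (1 - (κ₀ + κ₁) * t) := by
  intro u hu
  have hσ : 0 < σ₀ + σ₁ := by positivity
  have hD : 0 < 1 - (κ₀ + κ₁) * t := by
    have := (lt_div_iff₀ (by positivity : 0 < κ₀ + κ₁)).mp ht
    linarith
  have h1u : 1 - u = σ₁ / (σ₀ + σ₁) * (1 - (κ₀ + κ₁) * t) + κ₁ * t := by
    rw [hu]
    field_simp
    ring
  have hslack₀ : u - κ₀ * t = σ₀ / (σ₀ + σ₁) * (1 - (κ₀ + κ₁) * t) := by rw [hu]; ring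
  have hslack₁ : (1 - u) - κ₁ * t = σ₁ / (σ₀ + σ₁) * (1 - (κ₀ + κ₁) * t) := by rw [h1u]; ring
  have hlt₀ : κ₀ * t < u := by
    have : 0 < σ₀ / (σ₀ + σ₁) * (1 - (κ₀ + κ₁) * t) := by positivity
    linarith
  have hlt₁ : κ₁ * t < 1 - u := by
    have : 0 < σ₁ / (σ₀ + σ₁) * (1 - (κ₀ + κ₁) * t) := by positivity
    linarith
  have hu0 : 0 < u := by linarith [mul_nonneg hκ₀.le ht0]
  have hu1 : 0 < 1 - u := by linarith [mul_nonneg hκ₁.le ht0]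
  refine ⟨hu0, by linarith, h1u, div_lt_one_div_of_mul_lt hu0 hκ₀ hlt₀,
    div_lt_one_div_of_mul_lt hu1 hκ₁ hlt₁, ?_⟩
  rw [mul_sq_div_one_sub_mul_div _ _ _ hu0.ne', mul_sq_div_one_sub_mul_div _ _ _ hu1.ne',
    hslack₀, hslack₁]
  exact sq_div_add_sq_div_of_proportional hσ.ne' t _

end
end

section
/- Let X and Y be random variables defined on a probability space (Ω, 𝒜, P), taking values in Borel (standard) spaces B_1 and B_2 respectively. Then β( σ(X), σ(Y) ) = (1/2) ‖ P_{X,Y} − P_X ⊗ P_Y ‖, where P_{X,Y} is the joint distribution of (X,Y), P_X and P_Y are the marginal distributions of X and Y, and ‖μ − ν‖ denotes the total variation of the signed measure μ − ν. -/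
open MeasureTheory ProbabilityTheory Matrix Set Real

noncomputable section

/-!
Write `s = P_{X,Y} − P_X ⊗ P_Y`. Partitions `(X⁻¹ Aᵢ)`, `(Y⁻¹ Bⱼ)` can be taken with `(Aᵢ)`,
`(Bⱼ)` measurable partitions of `B₁`, `B₂`, so the β-sum is `Σ |s (Aᵢ ×ˢ Bⱼ)|`, a sum over disjoint
rectangles, hence at most `|s| univ`. Conversely `|s| univ = s E − s Eᶜ` for a Hahn set `E`.
Approximating `E` in `|s|`-measure by a set `F` of the algebra generated by rectangles, `F` only
depends on the membership of the coordinates in finitely many measurable sets, so it is a union of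
cells of a product of two finite partitions, and `s F − s Fᶜ` is bounded by the β-sum of those
partitions.
-/

open scoped symmDiff Function

namespace MeasureTheory.SignedMeasure

variable {α : Type*} [MeasurableSpace α] (s : SignedMeasure α)

lemma sum_abs_apply_le_totalVariation {ι : Type*} [Fintype ι] {c : ι → Set α}
    (hc : ∀ i, MeasurableSet (c i)) (hd : Pairwise (Disjoint on c)) :
    ∑ i, |s (c i)| ≤ s.totalVariation.real univ :=
  calc ∑ i, |s (c i)| ≤ ∑ i, s.totalVariation.real (c i) :=
        Finset.sum_le_sum fun i _ => s.norm_le_totalVariation (c i)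
    _ = s.totalVariation.real (⋃ i, c i) := (measureReal_iUnion_fintype hd hc).symm
    _ ≤ s.totalVariation.real univ := measureReal_mono (subset_univ _)

lemma exists_totalVariation_univ_eq_sub_compl :
    ∃ E, MeasurableSet E ∧ s.totalVariation.real univ = s E - s Eᶜ := by
  obtain ⟨E, hE, hpos, hneg, hposPart, hnegPart⟩ := s.toJordanDecomposition_spec
  refine ⟨E, hE, ?_⟩
  rw [totalVariation, measureReal_add_apply, hposPart, hnegPart, measureReal_def,
    measureReal_def, toMeasureOfZeroLE_apply _ hpos hE MeasurableSet.univ,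
    toMeasureOfLEZero_apply _ hneg hE.compl MeasurableSet.univ]
  simp [sub_eq_add_neg]

lemma apply_le_apply_add_totalVariation_symmDiff {E F : Set α} (hE : MeasurableSet E)
    (hF : MeasurableSet F) : s E ≤ s F + s.totalVariation.real (E ∆ F) := by
  have hsplit : ∀ {G H : Set α}, MeasurableSet G → MeasurableSet H →
      s G = s (G ∩ H) + s (G \ H) := fun hG hH => by
    rw [← VectorMeasure.of_union (disjoint_sdiff_inter.symm) (hG.inter hH) (hG.diff hH),
      inter_union_sdiff]
  have hEF := hsplit hE hF
  have hFE := hsplit hF hE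
  rw [inter_comm] at hFE
  have hdiff : s.totalVariation.real (E ∆ F) =
      s.totalVariation.real (E \ F) + s.totalVariation.real (F \ E) := by
    rw [Set.symmDiff_def, measureReal_union disjoint_sdiff_sdiff (hF.diff hE)]
  have h₁ := (le_abs_self (s (E \ F))).trans (s.norm_le_totalVariation (E \ F))
  have h₂ := (neg_le_abs (s (F \ E))).trans (s.norm_le_totalVariation (F \ E))
  linarith

lemma apply_sub_apply_compl_le_sum_abs {ι : Type*} [Fintype ι] {c : ι → Set α}
    (hc : ∀ i, MeasurableSet (c i)) (hd : Pairwise (Disjoint on c)) (hcov : ⋃ i, c i = univ)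
    {F : Set α} (hF : MeasurableSet F) (hcell : ∀ i, c i ⊆ F ∨ Disjoint (c i) F) :
    s F - s Fᶜ ≤ ∑ i, |s (c i)| := by
  have hsplit : ∀ {G : Set α}, MeasurableSet G → s G = ∑ i, s (c i ∩ G) := fun hG => by
    have h := VectorMeasure.of_disjoint_iUnion (v := s) (fun i => (hc i).inter hG)
      (hd.mono fun i j h => h.mono inter_subset_left inter_subset_left)
    rwa [← iUnion_inter, hcov, univ_inter, tsum_fintype] at h
  rw [hsplit hF, hsplit hF.compl, ← Finset.sum_sub_distrib]
  refine Finset.sum_le_sum fun i _ => ?_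
  rcases hcell i with hsub | hdisj
  · rw [inter_eq_left.2 hsub, (disjoint_compl_right_iff_subset.2 hsub).inter_eq,
      VectorMeasure.empty, sub_zero]
    exact le_abs_self _
  · rw [hdisj.inter_eq, inter_eq_left.2 (subset_compl_iff_disjoint_right.2 hdisj),
      VectorMeasure.empty, zero_sub]
    exact neg_le_abs _

lemma totalVariation_univ_le_of_isSetAlgebra {𝒜 : Set (Set α)} (h𝒜 : IsSetAlgebra 𝒜)
    (hgen : ‹MeasurableSpace α› = MeasurableSpace.generateFrom 𝒜) {S : ℝ}
    (hS : ∀ F ∈ 𝒜, s F - s Fᶜ ≤ S) : s.totalVariation.real univ ≤ S := by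
  have hdense := Measure.MeasureDense.of_generateFrom_isSetAlgebra_finite
    (μ := s.totalVariation) h𝒜 hgen
  obtain ⟨E, hE, hEq⟩ := s.exists_totalVariation_univ_eq_sub_compl
  refine le_of_forall_pos_le_add fun ε hε => ?_
  obtain ⟨F, hF𝒜, hEF⟩ := hdense.approx E hE (measure_ne_top _ _) (ε / 2) (half_pos hε)
  have hF := hdense.measurable F hF𝒜
  have hδ : s.totalVariation.real (E ∆ F) ≤ ε / 2 := by
    rw [measureReal_def]
    exact ENNReal.toReal_le_of_le_ofReal (half_pos hε).le hEF.le
  have h₁ := s.apply_le_apply_add_totalVariation_symmDiff hE hF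
  have h₂ := s.apply_le_apply_add_totalVariation_symmDiff hF.compl hE.compl
  rw [compl_symmDiff_compl, symmDiff_comm] at h₂
  linarith [hS F hF𝒜]

end MeasureTheory.SignedMeasure

section PartitionAtom

variable {β γ : Type*}

def partitionAtom (𝒜 : Finset (Set β)) (σ : 𝒜 → Bool) : Set β :=
  {x | ∀ a : 𝒜, x ∈ (a : Set β) ↔ σ a}

lemma measurableSet_partitionAtom [MeasurableSpace β] {𝒜 : Finset (Set β)}
    (h𝒜 : ∀ a ∈ 𝒜, MeasurableSet a) (σ : 𝒜 → Bool) : MeasurableSet (partitionAtom 𝒜 σ) := by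
  rw [partitionAtom, ofPred_forall]
  refine MeasurableSet.iInter fun a => ?_
  cases σ a
  · simp only [Bool.false_eq_true, iff_false]
    exact (h𝒜 a a.2).compl
  · simpa using h𝒜 a a.2

lemma pairwise_disjoint_partitionAtom (𝒜 : Finset (Set β)) :
    Pairwise (Disjoint on partitionAtom 𝒜) := by
  refine fun σ τ hστ => disjoint_left.2 fun x hσ hτ => hστ (funext fun a => ?_)
  rw [← Bool.coe_iff_coe, ← hσ a, ← hτ a]

lemma iUnion_partitionAtom (𝒜 : Finset (Set β)) : ⋃ σ, partitionAtom 𝒜 σ = univ := by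
  classical
  exact eq_univ_of_forall fun x => mem_iUnion.2 ⟨fun a => decide (x ∈ (a : Set β)), by
    simp [partitionAtom]⟩

def IsDeterminedBy (𝒜 : Finset (Set β)) (ℬ : Finset (Set γ)) (F : Set (β × γ)) : Prop :=
  ∀ p q : β × γ, (∀ a ∈ 𝒜, p.1 ∈ a ↔ q.1 ∈ a) → (∀ b ∈ ℬ, p.2 ∈ b ↔ q.2 ∈ b) →
    (p ∈ F ↔ q ∈ F)

lemma IsDeterminedBy.mono {𝒜 𝒜' : Finset (Set β)} {ℬ ℬ' : Finset (Set γ)} {F : Set (β × γ)}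
    (h : IsDeterminedBy 𝒜 ℬ F) (h𝒜 : 𝒜 ⊆ 𝒜') (hℬ : ℬ ⊆ ℬ') : IsDeterminedBy 𝒜' ℬ' F :=
  fun p q hp hq => h p q (fun a ha => hp a (h𝒜 ha)) (fun b hb => hq b (hℬ hb))

lemma exists_isDeterminedBy_of_mem_generateSetAlgebra {S : Set (Set β)} {T : Set (Set γ)}
    {F : Set (β × γ)} (hF : F ∈ generateSetAlgebra (image2 (· ×ˢ ·) S T)) :
    ∃ (𝒜 : Finset (Set β)) (ℬ : Finset (Set γ)), ↑𝒜 ⊆ S ∧ ↑ℬ ⊆ T ∧ IsDeterminedBy 𝒜 ℬ F := by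
  classical
  induction hF with
  | base _ hF =>
    obtain ⟨a, ha, b, hb, rfl⟩ := hF
    refine ⟨{a}, {b}, by simpa using ha, by simpa using hb, fun p q hp hq => ?_⟩
    simp only [mem_prod, hp a (Finset.mem_singleton_self a), hq b (Finset.mem_singleton_self b)]
  | empty => exact ⟨∅, ∅, by simp, by simp, fun _ _ _ _ => Iff.rfl⟩
  | compl _ _ ih =>
    obtain ⟨𝒜, ℬ, h𝒜, hℬ, h⟩ := ih
    exact ⟨𝒜, ℬ, h𝒜, hℬ, fun p q hp hq => not_congr (h p q hp hq)⟩
  | union _ _ _ _ ih₁ ih₂ =>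
    obtain ⟨𝒜₁, ℬ₁, h𝒜₁, hℬ₁, h₁⟩ := ih₁
    obtain ⟨𝒜₂, ℬ₂, h𝒜₂, hℬ₂, h₂⟩ := ih₂
    refine ⟨𝒜₁ ∪ 𝒜₂, ℬ₁ ∪ ℬ₂, by simp [h𝒜₁, h𝒜₂], by simp [hℬ₁, hℬ₂], fun p q hp hq => ?_⟩
    exact or_congr
      (h₁.mono Finset.subset_union_left Finset.subset_union_left p q hp hq)
      (h₂.mono Finset.subset_union_right Finset.subset_union_right p q hp hq)

lemma IsDeterminedBy.prod_partitionAtom_subset_or_disjoint {𝒜 : Finset (Set β)}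
    {ℬ : Finset (Set γ)} {F : Set (β × γ)} (h : IsDeterminedBy 𝒜 ℬ F) (σ : 𝒜 → Bool)
    (τ : ℬ → Bool) :
    partitionAtom 𝒜 σ ×ˢ partitionAtom ℬ τ ⊆ F ∨
      Disjoint (partitionAtom 𝒜 σ ×ˢ partitionAtom ℬ τ) F := by
  refine or_iff_not_imp_right.2 fun hF => ?_
  obtain ⟨z, hz, hzF⟩ := not_disjoint_iff.1 hF
  refine fun w hw => (h w z (fun a ha => ?_) (fun b hb => ?_)).2 hzF
  · rw [hw.1 ⟨a, ha⟩, hz.1 ⟨a, ha⟩]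
  · rw [hw.2 ⟨b, hb⟩, hz.2 ⟨b, hb⟩]

end PartitionAtom

lemma Pairwise.disjoint_set_prod {ι κ β γ : Type*} {A : ι → Set β} {B : κ → Set γ}
    (hA : Pairwise (Disjoint on A)) (hB : Pairwise (Disjoint on B)) :
    Pairwise (Disjoint on fun p : ι × κ => A p.1 ×ˢ B p.2) := by
  rintro ⟨i, j⟩ ⟨i', j'⟩ h
  rcases eq_or_ne i i' with rfl | hi
  · exact Disjoint.set_prod_right (hB fun hj => h (Prod.ext rfl hj)) _ _
  · exact Disjoint.set_prod_left (hA hi) _ _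

lemma exists_measurable_pairwise_disjoint_preimage_eq {Ω β ι : Type*} [MeasurableSpace β]
    [LinearOrder ι] [LocallyFiniteOrderBot ι] {X : Ω → β} {A : ι → Set Ω}
    (hA : ∀ i, MeasurableSet[MeasurableSpace.comap X inferInstance] (A i))
    (hd : Pairwise (Disjoint on A)) :
    ∃ A' : ι → Set β, (∀ i, MeasurableSet (A' i)) ∧ Pairwise (Disjoint on A') ∧
      ∀ i, X ⁻¹' A' i = A i := by
  choose A' hA' hXA' using fun i => MeasurableSpace.measurableSet_comap.1 (hA i)
  refine ⟨disjointed A', fun i => disjointedRec (fun _ j ht => ht.diff (hA' j)) (hA' i),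
    disjoint_disjointed A', fun i => ?_⟩
  have hpre : X ⁻¹' disjointed A' i = disjointed (fun j => X ⁻¹' A' j) i := by
    simp only [disjointed_eq_inter_compl, preimage_inter, preimage_iInter, preimage_compl]
  rw [hpre, funext hXA']
  exact disjointed_eq_self fun j hj => hd hj.ne

section BetaMixing

variable {Ω B₁ B₂ : Type*}

def betaSums {mΩ : MeasurableSpace Ω} (μ : Measure[mΩ] Ω) (m₁ m₂ : MeasurableSpace Ω) : Set ℝ :=
  { r : ℝ |
    ∃ (n m : ℕ) (A : Fin n → Set Ω) (B : Fin m → Set Ω),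
      (∀ i, MeasurableSet[m₁] (A i)) ∧ (∀ j, MeasurableSet[m₂] (B j)) ∧
      Pairwise (Disjoint on A) ∧ Pairwise (Disjoint on B) ∧ ⋃ i, A i = univ ∧ ⋃ j, B j = univ ∧
      r = ∑ i, ∑ j, |(μ (A i ∩ B j)).toReal - (μ (A i)).toReal * (μ (B j)).toReal| }

lemma betaMix_eq_half_sSup_betaSums {mΩ : MeasurableSpace Ω} (μ : Measure[mΩ] Ω)
    (m₁ m₂ : MeasurableSpace Ω) : @betaMix Ω mΩ μ m₁ m₂ = 1 / 2 * sSup (betaSums μ m₁ m₂) := rfl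

lemma sum_mem_betaSums {mΩ : MeasurableSpace Ω} {μ : Measure[mΩ] Ω} {m₁ m₂ : MeasurableSpace Ω}
    {ι κ : Type*} [Fintype ι] [Fintype κ] {A : ι → Set Ω} {B : κ → Set Ω}
    (hA : ∀ i, MeasurableSet[m₁] (A i)) (hB : ∀ j, MeasurableSet[m₂] (B j))
    (hdA : Pairwise (Disjoint on A)) (hdB : Pairwise (Disjoint on B))
    (hcA : ⋃ i, A i = univ) (hcB : ⋃ j, B j = univ) :
    ∑ i, ∑ j, |(μ (A i ∩ B j)).toReal - (μ (A i)).toReal * (μ (B j)).toReal|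
      ∈ betaSums μ m₁ m₂ := by
  let e := (Fintype.equivFin ι).symm
  let f := (Fintype.equivFin κ).symm
  refine ⟨_, _, A ∘ e, B ∘ f, fun i => hA (e i), fun j => hB (f j),
    hdA.comp_of_injective e.injective, hdB.comp_of_injective f.injective,
    by rw [← hcA]; exact e.surjective.iUnion_comp A,
    by rw [← hcB]; exact f.surjective.iUnion_comp B, ?_⟩
  rw [← e.sum_comp]
  exact Finset.sum_congr rfl fun i _ => (f.sum_comp _).symm

variable [MeasurableSpace Ω] [MeasurableSpace B₁] [MeasurableSpace B₂]
  (μ : Measure Ω) [IsFiniteMeasure μ] (X : Ω → B₁) (Y : Ω → B₂)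

def jointLawSubProdLaw : SignedMeasure (B₁ × B₂) :=
  (Measure.map (fun ω => (X ω, Y ω)) μ).toSignedMeasure -
    ((Measure.map X μ).prod (Measure.map Y μ)).toSignedMeasure

variable {μ X Y}

lemma jointLawSubProdLaw_prod (hX : Measurable X) (hY : Measurable Y) {a : Set B₁} {b : Set B₂}
    (ha : MeasurableSet a) (hb : MeasurableSet b) :
    jointLawSubProdLaw μ X Y (a ×ˢ b) =
      (μ (X ⁻¹' a ∩ Y ⁻¹' b)).toReal - (μ (X ⁻¹' a)).toReal * (μ (Y ⁻¹' b)).toReal := by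
  rw [jointLawSubProdLaw, Measure.toSignedMeasure_sub_apply (ha.prod hb), measureReal_def,
    measureReal_def, Measure.map_apply (hX.prodMk hY) (ha.prod hb), mk_preimage_prod,
    Measure.prod_prod, ENNReal.toReal_mul, Measure.map_apply hX ha, Measure.map_apply hY hb]

lemma le_totalVariation_of_mem_betaSums (hX : Measurable X) (hY : Measurable Y) {r : ℝ}
    (hr : r ∈ betaSums μ (MeasurableSpace.comap X inferInstance)
      (MeasurableSpace.comap Y inferInstance)) :
    r ≤ (jointLawSubProdLaw μ X Y).totalVariation.real univ := by
  obtain ⟨n, m, A, B, hA, hB, hdA, hdB, -, -, rfl⟩ := hr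
  obtain ⟨A', hA', hdA', hXA'⟩ := exists_measurable_pairwise_disjoint_preimage_eq hA hdA
  obtain ⟨B', hB', hdB', hYB'⟩ := exists_measurable_pairwise_disjoint_preimage_eq hB hdB
  calc _ = ∑ p : Fin n × Fin m, |jointLawSubProdLaw μ X Y (A' p.1 ×ˢ B' p.2)| := by
        simp only [Fintype.sum_prod_type, jointLawSubProdLaw_prod hX hY (hA' _) (hB' _),
          hXA', hYB']
    _ ≤ _ := SignedMeasure.sum_abs_apply_le_totalVariation _
        (fun p => (hA' p.1).prod (hB' p.2)) (hdA'.disjoint_set_prod hdB')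

lemma apply_sub_apply_compl_le_sSup_betaSums (hX : Measurable X) (hY : Measurable Y)
    {𝒜 : Finset (Set B₁)} {ℬ : Finset (Set B₂)} (h𝒜 : ∀ a ∈ 𝒜, MeasurableSet a)
    (hℬ : ∀ b ∈ ℬ, MeasurableSet b) {F : Set (B₁ × B₂)} (hF : MeasurableSet F)
    (hFdet : IsDeterminedBy 𝒜 ℬ F) :
    jointLawSubProdLaw μ X Y F - jointLawSubProdLaw μ X Y Fᶜ ≤
      sSup (betaSums μ (MeasurableSpace.comap X inferInstance)
        (MeasurableSpace.comap Y inferInstance)) := by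
  have hbdd : BddAbove (betaSums μ (MeasurableSpace.comap X inferInstance)
      (MeasurableSpace.comap Y inferInstance)) :=
    ⟨_, fun r hr => le_totalVariation_of_mem_betaSums hX hY hr⟩
  have hatom₁ := measurableSet_partitionAtom h𝒜
  have hatom₂ := measurableSet_partitionAtom hℬ
  have hcells := SignedMeasure.apply_sub_apply_compl_le_sum_abs (jointLawSubProdLaw μ X Y)
    (fun p : (𝒜 → Bool) × (ℬ → Bool) => (hatom₁ p.1).prod (hatom₂ p.2))
    ((pairwise_disjoint_partitionAtom 𝒜).disjoint_set_prod (pairwise_disjoint_partitionAtom ℬ))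
    (by rw [iUnion_prod, iUnion_partitionAtom, iUnion_partitionAtom, univ_prod_univ]) hF
    fun p => hFdet.prod_partitionAtom_subset_or_disjoint p.1 p.2
  refine hcells.trans (le_csSup hbdd ?_)
  simp only [Fintype.sum_prod_type, jointLawSubProdLaw_prod hX hY (hatom₁ _) (hatom₂ _)]
  exact sum_mem_betaSums (fun σ => ⟨_, hatom₁ σ, rfl⟩) (fun τ => ⟨_, hatom₂ τ, rfl⟩)
    ((pairwise_disjoint_partitionAtom 𝒜).mono fun _ _ h => h.preimage X)
    ((pairwise_disjoint_partitionAtom ℬ).mono fun _ _ h => h.preimage Y)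
    (by rw [← preimage_iUnion, iUnion_partitionAtom, preimage_univ])
    (by rw [← preimage_iUnion, iUnion_partitionAtom, preimage_univ])

end BetaMixing

theorem betaMix_eq_half_totalVariation_general
    {Ω B₁ B₂ : Type*} [MeasurableSpace Ω]
    [MeasurableSpace B₁]
    [MeasurableSpace B₂]
    (μ : Measure Ω) [IsProbabilityMeasure μ]
    (X : Ω → B₁) (Y : Ω → B₂) (hX : Measurable X) (hY : Measurable Y) :
    betaMix μ (MeasurableSpace.comap X inferInstance)
        (MeasurableSpace.comap Y inferInstance) =
      (1 / 2) * (((Measure.map (fun ω => (X ω, Y ω)) μ).toSignedMeasure -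
          ((Measure.map X μ).prod (Measure.map Y μ)).toSignedMeasure).totalVariation
        Set.univ).toReal := by
  rw [betaMix_eq_half_sSup_betaSums]
  congr 1
  refine le_antisymm (Real.sSup_le (fun r hr => le_totalVariation_of_mem_betaSums hX hY hr)
    ENNReal.toReal_nonneg) ?_
  have hgen : (Prod.instMeasurableSpace : MeasurableSpace (B₁ × B₂)) =
      MeasurableSpace.generateFrom (generateSetAlgebra
        (image2 (· ×ˢ ·) {a : Set B₁ | MeasurableSet a} {b : Set B₂ | MeasurableSet b})) := by
    rw [generateFrom_generateSetAlgebra_eq, generateFrom_prod]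
  refine (jointLawSubProdLaw μ X Y).totalVariation_univ_le_of_isSetAlgebra
    isSetAlgebra_generateSetAlgebra hgen fun F hF => ?_
  obtain ⟨𝒜, ℬ, h𝒜, hℬ, hFdet⟩ := exists_isDeterminedBy_of_mem_generateSetAlgebra hF
  exact apply_sub_apply_compl_le_sSup_betaSums hX hY h𝒜 hℬ
    (hgen ▸ MeasurableSpace.measurableSet_generateFrom hF) hFdet

/-- The β-dependence coefficient between `σ(X)` and `σ(Y)` equals half the total
variation of `P_{X,Y} − P_X ⊗ P_Y`. -/
theorem betaMix_eq_half_totalVariation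
    {Ω B₁ B₂ : Type*} [MeasurableSpace Ω]
    [MeasurableSpace B₁] [StandardBorelSpace B₁]
    [MeasurableSpace B₂] [StandardBorelSpace B₂]
    (μ : Measure Ω) [IsProbabilityMeasure μ]
    (X : Ω → B₁) (Y : Ω → B₂) (hX : Measurable X) (hY : Measurable Y) :
    betaMix μ (MeasurableSpace.comap X inferInstance)
        (MeasurableSpace.comap Y inferInstance) =
      (1 / 2) * (((Measure.map (fun ω => (X ω, Y ω)) μ).toSignedMeasure -
          ((Measure.map X μ).prod (Measure.map Y μ)).toSignedMeasure).totalVariation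
        Set.univ).toReal :=
  betaMix_eq_half_totalVariation_general μ X Y hX hY
end
end

section
/- Let A ≥ 2 be an integer, set δ = log 2 / (2 log A), and assume the set {k ∈ ℕ* : A δ (1−δ)^{k−1}/2^k ≥ 2} is nonempty; let ℓ be its supremum (which is finite). Define n_0 = A and n_j = ⌈ A(1−δ)^j / 2^j ⌉ for j = 1,…,ℓ. Then ℓ ≤ log A / log 2, δ ≤ 1/2, and A − 2^ℓ n_ℓ ≤ A( 1 − (1−δ)^ℓ ) ≤ A δ ℓ ≤ A/2. -/
open Real

/-! Every `k ∈ S` satisfies `2 ^ k ≤ A`, since `δ (1 - δ) ^ (k - 1) ≤ 1`; this bounds `S`, so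
`ℓ ∈ S` and `ℓ ≤ log A / log 2`, whence `δ ℓ ≤ 1 / 2` by the choice of `δ`. The ceiling gives
`2 ^ ℓ n_ℓ ≥ A (1 - δ) ^ ℓ`, and Bernoulli's inequality gives `1 - (1 - δ) ^ ℓ ≤ δ ℓ`. -/

lemma one_sub_one_sub_pow_le_mul {δ : ℝ} (hδ : δ ≤ 2) (n : ℕ) : 1 - (1 - δ) ^ n ≤ δ * n := by
  have := one_add_mul_le_pow (a := -δ) (by linarith) n
  rw [← sub_eq_add_neg] at this
  linarith

lemma le_mul_natCeil_div {a c : ℝ} (hc : 0 < c) : a ≤ c * ⌈a / c⌉₊ :=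
  (div_le_iff₀' hc).mp (Nat.le_ceil _)

lemma two_pow_le_of_two_le_mul_div_two_pow {A δ : ℝ} {m k : ℕ} (hA : 0 ≤ A) (hδ₀ : 0 ≤ δ)
    (hδ₁ : δ ≤ 1) (h : 2 ≤ A * δ * (1 - δ) ^ m / 2 ^ k) : (2 : ℝ) ^ k ≤ A := by
  rw [le_div_iff₀ (by positivity)] at h
  have : A * δ * (1 - δ) ^ m ≤ A * 1 * 1 := by
    gcongr
    exact pow_le_one₀ (by linarith) (by linarith)
  linarith

lemma natCast_le_log_div_log_two {x : ℝ} {k : ℕ} (h : (2 : ℝ) ^ k ≤ x) :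
    (k : ℝ) ≤ log x / log 2 := by
  rw [le_div_iff₀ (log_pos one_lt_two), ← Real.log_pow]
  exact log_le_log (by positivity) h

lemma log_two_div_two_mul_log_le_half {x : ℝ} (hx : 2 ≤ x) : log 2 / (2 * log x) ≤ 1 / 2 := by
  have := log_le_log two_pos hx
  rw [div_le_div_iff₀ (by have := log_pos (by linarith : 1 < x); positivity) two_pos]
  linarith

lemma log_two_div_two_mul_log_mul_le_half {x t : ℝ} (hx : 1 < x) (ht : t ≤ log x / log 2) :
    log 2 / (2 * log x) * t ≤ 1 / 2 := by
  have := log_pos hx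
  calc log 2 / (2 * log x) * t ≤ log 2 / (2 * log x) * (log x / log 2) := by gcongr
    _ = 1 / 2 := by field_simp

/-- Parameters of the Cantor-like construction: with `δ = log 2 / (2 log A)` and
`ℓ = sup{k ≥ 1 : Aδ(1−δ)^{k−1}/2^k ≥ 2}`, one has `ℓ ≤ log A / log 2`, `δ ≤ 1/2` and
`A − 2^ℓ n_ℓ ≤ A(1−(1−δ)^ℓ) ≤ Aδℓ ≤ A/2`, where `n_ℓ = ⌈A(1−δ)^ℓ/2^ℓ⌉`. -/
theorem cantor_like_set_cardinality_bounds
    (A : ℕ) (hA : 2 ≤ A) :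
    ∀ δ : ℝ, δ = Real.log 2 / (2 * Real.log A) →
    ∀ S : Set ℕ, S = {k : ℕ | 1 ≤ k ∧ 2 ≤ (A : ℝ) * δ * (1 - δ) ^ (k - 1) / 2 ^ k} →
    S.Nonempty →
    ∀ ℓ : ℕ, ℓ = sSup S →
    ∀ nl : ℕ, nl = ⌈(A : ℝ) * (1 - δ) ^ ℓ / 2 ^ ℓ⌉₊ →
      (ℓ : ℝ) ≤ Real.log A / Real.log 2 ∧
      δ ≤ 1 / 2 ∧
      (A : ℝ) - 2 ^ ℓ * nl ≤ A * (1 - (1 - δ) ^ ℓ) ∧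
      (A : ℝ) * (1 - (1 - δ) ^ ℓ) ≤ A * δ * ℓ ∧
      (A : ℝ) * δ * ℓ ≤ A / 2 := by
  intro δ hδ S hS hSne ℓ hℓ nl hnl
  have hA₂ : (2 : ℝ) ≤ A := by exact_mod_cast hA
  have hδ₀ : 0 ≤ δ := hδ ▸ div_nonneg (log_nonneg one_le_two)
    (mul_nonneg zero_le_two (log_nonneg (by linarith)))
  have hδ_half : δ ≤ 1 / 2 := hδ ▸ log_two_div_two_mul_log_le_half hA₂
  have two_pow_le : ∀ k ∈ S, (2 : ℝ) ^ k ≤ A := fun k hk =>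
    two_pow_le_of_two_le_mul_div_two_pow (by positivity) hδ₀ (by linarith) (hS ▸ hk).2
  have hℓS : ℓ ∈ S := hℓ ▸ Nat.sSup_mem hSne
    ⟨A, fun k hk => Nat.lt_two_pow_self.le.trans (by exact_mod_cast two_pow_le k hk)⟩
  have hℓ_log : (ℓ : ℝ) ≤ log A / log 2 := natCast_le_log_div_log_two (two_pow_le ℓ hℓS)
  refine ⟨hℓ_log, hδ_half, ?_, ?_, ?_⟩
  · have := le_mul_natCeil_div (a := A * (1 - δ) ^ ℓ) (pow_pos two_pos ℓ)
    rw [hnl]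
    linarith
  · rw [mul_assoc]
    exact mul_le_mul_of_nonneg_left (one_sub_one_sub_pow_le_mul (by linarith) ℓ) (by positivity)
  · have := log_two_div_two_mul_log_mul_le_half (by linarith) hℓ_log
    rw [← hδ] at this
    rw [mul_assoc, div_eq_mul_one_div (A : ℝ)]
    exact mul_le_mul_of_nonneg_left this (by positivity)
end
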